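/- In the setting of TRO-equivalent algebras A = closure(span(M* B M)), B = closure(span(M A M*)) with TRO M, the algebra C = closure(span(M* M)) (the α(A)-part) satisfies: A₀ = closure(A + C) is a Δ-pair with C, i.e., A₀ = closure(span(A₀ C)) = closure(span(C A₀)), and A is a two-sided ideal of A₀. -/
import Mathlib


open ContinuousLinearMap

noncomputable section

/-- Norm closure of the linear span of a set of operators. -/
def csp {E : Type*} [NormedAddCommGroup E] [NormedSpace ℂ E] (S : Set E) : Set E :=
  closure (Submodule.span ℂ S : Set E)

open Submodule

private lemma aux_scalar (v : ℝ) (n : ℕ) (hv0 : 0 ≤ v) (hv1 : v ≤ 1) (hn : 1 ≤ n) :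
    v * (1 - v^2)^n ≤ 1 / Real.sqrt n := by
  have hs : (0:ℝ) < Real.sqrt n := Real.sqrt_pos.2 (by exact_mod_cast hn)
  have hsq : (Real.sqrt n)^2 = (n:ℝ) := Real.sq_sqrt (by positivity)
  have h1 : (0:ℝ) ≤ 1 - v^2 := by nlinarith
  have h2 : (1 - v^2 : ℝ) ≤ (1 + v^2)⁻¹ := by
    rw [inv_eq_one_div, le_div_iff₀ (by positivity)]
    nlinarith
  have h3 : (1 - v^2:ℝ)^n ≤ ((1 + v^2)⁻¹)^n := pow_le_pow_left₀ h1 h2 n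
  have h4 : (1 + (n:ℝ) * v^2) ≤ (1 + v^2)^n := by
    have := one_add_mul_le_pow (a := v^2) (by nlinarith) n
    linarith
  have h5 : ((1 + v^2:ℝ))⁻¹^n = ((1+v^2)^n)⁻¹ := by rw [inv_pow]
  have h6 : ((1+v^2:ℝ)^n)⁻¹ ≤ (1 + n * v^2)⁻¹ := by
    apply inv_anti₀ (by positivity) h4
  have h7 : v * (1 - v^2)^n ≤ v / (1 + n * v^2) := by
    rw [div_eq_mul_inv]
    have := h3.trans (le_of_eq h5) |>.trans h6
    exact mul_le_mul_of_nonneg_left this hv0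
  refine h7.trans ?_
  rw [div_le_div_iff₀ (by positivity) hs]
  nlinarith [sq_nonneg (Real.sqrt n * v - 1), hs.le, mul_nonneg hs.le hv0, hsq]

private lemma aux_key {E : Type*} [CStarAlgebra E] (a : E) (ha : IsSelfAdjoint a) :
    a ∈ closure (span ℂ {x : E | ∃ k : ℕ, x = a ^ (k + 2)} : Set E) := by
  by_cases h0 : a = 0
  · subst h0
    exact subset_closure (zero_mem _)
  haveI : Nontrivial E := nontrivial_of_ne a 0 h0
  set S : Submodule ℂ E := span ℂ {x : E | ∃ k : ℕ, x = a ^ (k + 2)} with hS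
  have hpows : ∀ k : ℕ, a ^ (k + 2) ∈ S := fun k => subset_span ⟨k, rfl⟩
  have hS2 : ∀ x ∈ S, x * a ^ 2 ∈ S := by
    intro x hx
    induction hx using Submodule.span_induction with
    | mem x hx => obtain ⟨k, rfl⟩ := hx; rw [← pow_add]; exact hpows (k + 2)
    | zero => rw [zero_mul]; exact zero_mem _
    | add x y _ _ hx hy => rw [add_mul]; exact add_mem hx hy
    | smul c x _ hx => rw [smul_mul_assoc]; exact smul_mem _ _ hx
  set R : ℝ := ‖a‖ with hRdef
  have hR : 0 < R := norm_pos_iff.mpr h0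
  set r : ℝ := (R ^ 2)⁻¹ with hrdef
  have hkey : ∀ n : ℕ, a * (1 - r • a ^ 2) ^ n - a ∈ S := by
    intro n
    induction n with
    | zero => simp only [pow_zero, mul_one, sub_self]; exact zero_mem _
    | succ n ih =>
      have e1 : a * (1 - r • a ^ 2) ^ (n + 1) - a
          = (a * (1 - r • a ^ 2) ^ n - a) - r • ((a * (1 - r • a ^ 2) ^ n - a) * a ^ 2)
            + (a * (1 - r • a ^ 2) - a) := by
        rw [pow_succ, ← mul_assoc]
        rw [mul_sub, mul_sub, mul_one, mul_one, sub_mul, mul_smul_comm, mul_smul_comm, smul_sub]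
        abel
      rw [e1]
      refine add_mem (sub_mem ih (smul_of_tower_mem _ r (hS2 _ ih))) ?_
      have e2 : a * (1 - r • a ^ 2) - a = -(r • a ^ (1 + 2)) := by
        rw [mul_sub, mul_one, mul_smul_comm]
        rw [show a * a ^ 2 = a ^ (1 + 2) from by rw [pow_add, pow_one]]
        abel
      rw [e2]
      exact neg_mem (smul_of_tower_mem _ r (hpows 1))
  rw [Metric.mem_closure_iff]
  intro ε hε
  obtain ⟨n, hn⟩ := exists_nat_gt ((R / ε) ^ 2)
  have hn1 : 1 ≤ n := by
    by_contra hc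
    push_neg at hc
    interval_cases n
    · simp at hn; nlinarith [sq_nonneg (R/ε)]
  have hsn : (0:ℝ) < Real.sqrt n := Real.sqrt_pos.2 (by exact_mod_cast hn1)
  refine ⟨a - a * (1 - r • a ^ 2) ^ n, ?_, ?_⟩
  · have := neg_mem (hkey n)
    rw [neg_sub] at this
    exact this
  · rw [dist_eq_norm, sub_sub_cancel]
    have hcfc : cfc (fun t : ℝ => t * (1 - r * t ^ 2) ^ n) a = a * (1 - r • a ^ 2) ^ n := by
      rw [cfc_mul _ _ a, cfc_id' ℝ a, cfc_pow _ n a, cfc_sub _ _ a, cfc_const_one ℝ a,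
        cfc_const_mul r _ a, cfc_pow_id a 2]
    have hbound : ‖cfc (fun t : ℝ => t * (1 - r * t ^ 2) ^ n) a‖ ≤ R / Real.sqrt n := by
      apply norm_cfc_le (by positivity)
      intro t ht
      have htR : |t| ≤ R := by
        simpa using spectrum.norm_le_norm_of_mem ht
      set v : ℝ := |t| / R with hv
      have hv0 : 0 ≤ v := by positivity
      have hv1 : v ≤ 1 := by rw [hv, div_le_one hR]; exact htR
      have hvt : r * t ^ 2 = v ^ 2 := by
        rw [hv, div_pow, sq_abs, hrdef]
        ring
      have h1v : (0:ℝ) ≤ 1 - v ^ 2 := by nlinarith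
      have : ‖t * (1 - r * t ^ 2) ^ n‖ = R * (v * (1 - v ^ 2) ^ n) := by
        rw [Real.norm_eq_abs, abs_mul, abs_pow, hvt, abs_of_nonneg h1v]
        rw [hv]
        field_simp
      rw [this]
      calc R * (v * (1 - v ^ 2) ^ n) ≤ R * (1 / Real.sqrt n) :=
            mul_le_mul_of_nonneg_left (aux_scalar v n hv0 hv1 hn1) hR.le
        _ = R / Real.sqrt n := by ring
    rw [← hcfc]
    refine lt_of_le_of_lt hbound ?_
    rw [div_lt_iff₀ hsn]
    have : R / ε < Real.sqrt n := by
      rw [← Real.sqrt_sq (by positivity : (0:ℝ) ≤ R / ε)]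
      exact Real.sqrt_lt_sqrt (by positivity) hn
    calc R = (R / ε) * ε := by field_simp
      _ < Real.sqrt n * ε := by exact mul_lt_mul_of_pos_right this hε
      _ = ε * Real.sqrt n := by ring

private lemma map_closure_mem {X Y : Type*} [TopologicalSpace X] [TopologicalSpace Y]
    {f : X → Y} (hf : Continuous f) {S : Set X} {T : Set Y} (hT : IsClosed T)
    (h : ∀ x ∈ S, f x ∈ T) {x : X} (hx : x ∈ closure S) : f x ∈ T :=
  closure_minimal (fun y hy => h y hy) (hT.preimage hf) hx

private lemma span_mul_mem {E : Type*} [NormedRing E] [NormedAlgebra ℂ E]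
    (X Y : Set E) (T : Submodule ℂ E) (hT : IsClosed (T : Set E))
    (h : ∀ x ∈ X, ∀ y ∈ Y, x * y ∈ T) :
    ∀ u ∈ closure (span ℂ X : Set E), ∀ v ∈ closure (span ℂ Y : Set E), u * v ∈ T := by
  have inner : ∀ x ∈ X, ∀ v ∈ span ℂ Y, x * v ∈ T := by
    intro x hx v hv
    induction hv using Submodule.span_induction with
    | mem y hy => exact h x hx y hy
    | zero => rw [mul_zero]; exact zero_mem _
    | add y z _ _ hy hz => rw [mul_add]; exact add_mem hy hz
    | smul c y _ hy => rw [mul_smul_comm]; exact smul_mem _ _ hy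
  have key : ∀ v ∈ span ℂ Y, ∀ u ∈ span ℂ X, u * v ∈ T := by
    intro v hv u hu
    induction hu using Submodule.span_induction with
    | mem x hx => exact inner x hx v hv
    | zero => rw [zero_mul]; exact zero_mem _
    | add x y _ _ hx hy => rw [add_mul]; exact add_mem hx hy
    | smul c x _ hx => rw [smul_mul_assoc]; exact smul_mem _ _ hx
  have key2 : ∀ u ∈ span ℂ X, ∀ v ∈ closure (span ℂ Y : Set E), u * v ∈ T := by
    intro u hu v hv
    exact map_closure_mem (continuous_const.mul continuous_id) hT
      (fun y hy => key y hy u hu) hv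
  intro u hu v hv
  exact map_closure_mem (continuous_id.mul continuous_const) hT
    (fun x hx => key2 x hx v hv) hu

private lemma single_mul_mem {E : Type*} [NormedRing E] [NormedAlgebra ℂ E]
    (u : E) (Y : Set E) (T : Submodule ℂ E) (hT : IsClosed (T : Set E))
    (h : ∀ y ∈ Y, u * y ∈ T) :
    ∀ v ∈ closure (span ℂ Y : Set E), u * v ∈ T := by
  intro v hv
  refine span_mul_mem {u} Y T hT ?_ u ?_ v hv
  · rintro x rfl y hy; exact h y hy
  · exact subset_closure (Submodule.subset_span rfl)

private lemma mul_single_mem {E : Type*} [NormedRing E] [NormedAlgebra ℂ E]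
    (u : E) (X : Set E) (T : Submodule ℂ E) (hT : IsClosed (T : Set E))
    (h : ∀ x ∈ X, x * u ∈ T) :
    ∀ v ∈ closure (span ℂ X : Set E), v * u ∈ T := by
  intro v hv
  refine span_mul_mem X {u} T hT ?_ v hv u ?_
  · rintro x hx y rfl; exact h x hx
  · exact subset_closure (Submodule.subset_span rfl)

private lemma sandwich_mem {H K H' : Type*}
    [NormedAddCommGroup H] [InnerProductSpace ℂ H]
    [NormedAddCommGroup K] [InnerProductSpace ℂ K]
    [NormedAddCommGroup H'] [InnerProductSpace ℂ H']
    (u : K →L[ℂ] H') (v : H →L[ℂ] K) (X : Set (K →L[ℂ] K))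
    (T : Submodule ℂ (H →L[ℂ] H')) (hT : IsClosed (T : Set (H →L[ℂ] H')))
    (h : ∀ x ∈ X, u ∘L x ∘L v ∈ T) :
    ∀ y ∈ closure (span ℂ X : Set (K →L[ℂ] K)), u ∘L y ∘L v ∈ T := by
  intro y hy
  refine map_closure_mem (f := fun y : K →L[ℂ] K => u ∘L y ∘L v)
    (continuous_const.clm_comp (continuous_id.clm_comp continuous_const)) hT ?_ hy
  intro x hx
  induction hx using Submodule.span_induction with
  | mem x hx => exact h x hx
  | zero => simp only [zero_comp, comp_zero]; exact zero_mem _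
  | add x y _ _ hx hy => simp only [add_comp, comp_add]; exact add_mem hx hy
  | smul c x _ hx => simp only [smul_comp, comp_smul]; exact smul_mem _ _ hx

private lemma aux_polar {H K : Type*}
    [NormedAddCommGroup H] [InnerProductSpace ℂ H] [CompleteSpace H]
    [NormedAddCommGroup K] [InnerProductSpace ℂ K] [CompleteSpace K]
    (p q : H →L[ℂ] K) :
    (adjoint p) ∘L q = (4⁻¹ : ℂ) •
      ((adjoint (q + p) ∘L (q + p)) - (adjoint (q - p) ∘L (q - p))
        + Complex.I • (adjoint (q + Complex.I • p) ∘L (q + Complex.I • p))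
        - Complex.I • (adjoint (q - Complex.I • p) ∘L (q - Complex.I • p))) := by
  simp only [map_add, map_sub, map_smulₛₗ]
  simp only [Complex.conj_I]
  simp only [add_comp, comp_add, sub_comp, comp_sub, smul_comp, comp_smul]
  match_scalars <;> simp [Complex.I_sq] <;> ring

set_option maxHeartbeats 2000000 in
/-- Let `M ⊆ B(H,K)` be a TRO and `A ⊆ B(H)`, `B ⊆ B(K)` norm-closed subalgebras with
`A = closure span (M* B M)` and `B = closure span (M A M*)`. With
`C = closure span (M* M)` and `A₀ = closure (A + C)`, the pair `(A₀, C)` is a Δ-pair,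
i.e. `A₀ = closure span (A₀ C) = closure span (C A₀)`, and `A` is a two-sided ideal of
`A₀`. -/
theorem stmt8 {H K : Type*}
    [NormedAddCommGroup H] [InnerProductSpace ℂ H] [CompleteSpace H]
    [NormedAddCommGroup K] [InnerProductSpace ℂ K] [CompleteSpace K]
    (M : Submodule ℂ (H →L[ℂ] K)) (hMclosed : IsClosed (M : Set (H →L[ℂ] K)))
    (hTRO : ∀ m ∈ M, ∀ n ∈ M, ∀ l ∈ M, m ∘L (adjoint n) ∘L l ∈ M)
    (A : Submodule ℂ (H →L[ℂ] H)) (hAclosed : IsClosed (A : Set (H →L[ℂ] H)))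
    (hAmul : ∀ a ∈ A, ∀ b ∈ A, a ∘L b ∈ A)
    (B : Submodule ℂ (K →L[ℂ] K)) (hBclosed : IsClosed (B : Set (K →L[ℂ] K)))
    (hBmul : ∀ a ∈ B, ∀ b ∈ B, a ∘L b ∈ B)
    (hA : (A : Set (H →L[ℂ] H)) =
      csp {T | ∃ m ∈ M, ∃ b ∈ B, ∃ n ∈ M, T = (adjoint m) ∘L b ∘L n})
    (hB : (B : Set (K →L[ℂ] K)) =
      csp {T | ∃ m ∈ M, ∃ a ∈ A, ∃ n ∈ M, T = m ∘L a ∘L (adjoint n)})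
    (C : Set (H →L[ℂ] H))
    (hC : C = csp {S : H →L[ℂ] H | ∃ m ∈ M, ∃ n ∈ M, S = (adjoint m) ∘L n})
    (A₀ : Set (H →L[ℂ] H))
    (hA₀ : A₀ = closure {T : H →L[ℂ] H | ∃ a ∈ A, ∃ c ∈ C, T = a + c}) :
    A₀ = csp {T : H →L[ℂ] H | ∃ a ∈ A₀, ∃ c ∈ C, T = a ∘L c} ∧
    A₀ = csp {T : H →L[ℂ] H | ∃ c ∈ C, ∃ a ∈ A₀, T = c ∘L a} ∧
    (∀ a₀ ∈ A₀, ∀ a ∈ A, a₀ ∘L a ∈ A) ∧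
    (∀ a ∈ A, ∀ a₀ ∈ A₀, a ∘L a₀ ∈ A) := by
  set genA : Set (H →L[ℂ] H) :=
    {T | ∃ m ∈ M, ∃ b ∈ B, ∃ n ∈ M, T = (adjoint m) ∘L b ∘L n} with hgenA
  set genB : Set (K →L[ℂ] K) :=
    {T | ∃ m ∈ M, ∃ a ∈ A, ∃ n ∈ M, T = m ∘L a ∘L (adjoint n)} with hgenB
  set genC : Set (H →L[ℂ] H) :=
    {S : H →L[ℂ] H | ∃ m ∈ M, ∃ n ∈ M, S = (adjoint m) ∘L n} with hgenC
  set Cmod : Submodule ℂ (H →L[ℂ] H) := (span ℂ genC).topologicalClosure with hCmod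
  have hCset : C = (Cmod : Set (H →L[ℂ] H)) := by
    rw [hC]; exact (Submodule.topologicalClosure_coe _).symm
  have hCmodclosed : IsClosed (Cmod : Set (H →L[ℂ] H)) :=
    Submodule.isClosed_topologicalClosure _
  have hCmodc : (Cmod : Set (H →L[ℂ] H)) = closure (span ℂ genC : Set (H →L[ℂ] H)) :=
    Submodule.topologicalClosure_coe _
  have hgenCsub : genC ⊆ (Cmod : Set (H →L[ℂ] H)) :=
    fun x hx => Submodule.le_topologicalClosure _ (subset_span hx)
  have hgenBsub : genB ⊆ (B : Set (K →L[ℂ] K)) := by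
    rw [hB]; exact fun x hx => subset_closure (subset_span hx)
  have hgenAsub : genA ⊆ (A : Set (H →L[ℂ] H)) := by
    rw [hA]; exact fun x hx => subset_closure (subset_span hx)
  -- M M* B ⊆ B
  have hBMM : ∀ p ∈ M, ∀ r ∈ M, ∀ b ∈ B, (p ∘L adjoint r) * b ∈ B := by
    intro p hp r hr b hb
    have hb' : b ∈ closure (span ℂ genB : Set (K →L[ℂ] K)) := by
      have := hB ▸ (SetLike.mem_coe.mpr hb); exact this
    refine single_mul_mem (p ∘L adjoint r) genB B hBclosed ?_ b hb'
    rintro y ⟨s, hs, a, ha, t, ht, rfl⟩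
    exact hgenBsub ⟨p ∘L adjoint r ∘L s, hTRO p hp r hr s hs, a, ha, t, ht, rfl⟩
  -- B M M* ⊆ B
  have hMMB : ∀ b ∈ B, ∀ p ∈ M, ∀ r ∈ M, b * (p ∘L adjoint r) ∈ B := by
    intro b hb p hp r hr
    have hb' : b ∈ closure (span ℂ genB : Set (K →L[ℂ] K)) := by
      have := hB ▸ (SetLike.mem_coe.mpr hb); exact this
    refine mul_single_mem (p ∘L adjoint r) genB B hBclosed ?_ b hb'
    rintro y ⟨s, hs, a, ha, t, ht, rfl⟩
    refine hgenBsub ⟨s, hs, a, ha, r ∘L adjoint p ∘L t, hTRO r hr p hp t ht, ?_⟩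
    rw [adjoint_comp, adjoint_comp, adjoint_adjoint]
    rfl
  -- C A ⊆ A
  have hCA : ∀ c ∈ (Cmod : Set (H →L[ℂ] H)), ∀ a ∈ (A : Set (H →L[ℂ] H)), c * a ∈ A := by
    have h := span_mul_mem genC genA A hAclosed ?_
    · intro c hc a ha
      rw [hCmodc] at hc
      rw [hA] at ha
      exact h c hc a ha
    · rintro x ⟨m, hm, n, hn, rfl⟩ y ⟨p, hp, b, hb, q, hq, rfl⟩
      exact hgenAsub ⟨m, hm, _, hBMM n hn p hp b hb, q, hq, rfl⟩
  -- A C ⊆ A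
  have hAC : ∀ a ∈ (A : Set (H →L[ℂ] H)), ∀ c ∈ (Cmod : Set (H →L[ℂ] H)), a * c ∈ A := by
    have h := span_mul_mem genA genC A hAclosed ?_
    · intro a ha c hc
      rw [hCmodc] at hc
      rw [hA] at ha
      exact h a ha c hc
    · rintro x ⟨p, hp, b, hb, q, hq, rfl⟩ y ⟨m, hm, n, hn, rfl⟩
      exact hgenAsub ⟨p, hp, _, hMMB b hb q hq m hm, n, hn, rfl⟩
  -- C C ⊆ C
  have hCC : ∀ c ∈ (Cmod : Set (H →L[ℂ] H)), ∀ c' ∈ (Cmod : Set (H →L[ℂ] H)),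
      c * c' ∈ Cmod := by
    have h := span_mul_mem genC genC Cmod hCmodclosed ?_
    · intro c hc c' hc'
      rw [hCmodc] at hc hc'
      exact h c hc c' hc'
    · rintro x ⟨m, hm, n, hn, rfl⟩ y ⟨p, hp, q, hq, rfl⟩
      exact hgenCsub ⟨m, hm, n ∘L adjoint p ∘L q, hTRO n hn p hp q hq, rfl⟩
  -- A₀ as a closed submodule
  set A₀mod : Submodule ℂ (H →L[ℂ] H) := (A ⊔ Cmod).topologicalClosure with hA₀mod
  have hA₀set : A₀ = (A₀mod : Set (H →L[ℂ] H)) := by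
    rw [hA₀]
    have : {T : H →L[ℂ] H | ∃ a ∈ A, ∃ c ∈ C, T = a + c}
        = ((A ⊔ Cmod : Submodule ℂ (H →L[ℂ] H)) : Set (H →L[ℂ] H)) := by
      ext x
      simp only [Set.mem_setOf_eq, SetLike.mem_coe, Submodule.mem_sup]
      constructor
      · rintro ⟨a, ha, c, hc, rfl⟩
        exact ⟨a, ha, c, by rw [hCset] at hc; exact hc, rfl⟩
      · rintro ⟨y, hy, z, hz, rfl⟩
        exact ⟨y, hy, z, by rw [hCset]; exact hz, rfl⟩
    rw [this]
    exact (Submodule.topologicalClosure_coe _).symm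
  have hA₀c : (A₀mod : Set (H →L[ℂ] H))
      = closure ((A ⊔ Cmod : Submodule ℂ (H →L[ℂ] H)) : Set (H →L[ℂ] H)) :=
    Submodule.topologicalClosure_coe _
  have hA₀closed : IsClosed (A₀mod : Set (H →L[ℂ] H)) :=
    Submodule.isClosed_topologicalClosure _
  have hAsubA₀ : ∀ a ∈ A, a ∈ A₀mod :=
    fun a ha => Submodule.le_topologicalClosure _ (Submodule.mem_sup_left ha)
  have hCsubA₀ : ∀ c ∈ Cmod, c ∈ A₀mod :=
    fun c hc => Submodule.le_topologicalClosure _ (Submodule.mem_sup_right hc)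
  -- ideal property
  have hIdealL : ∀ a₀ ∈ A₀, ∀ a ∈ A, a₀ * a ∈ A := by
    intro a₀ ha₀ a ha
    rw [hA₀set, hA₀c] at ha₀
    refine map_closure_mem (f := fun x => x * a)
      (continuous_id.mul continuous_const) hAclosed ?_ ha₀
    intro x hx
    obtain ⟨y, hy, z, hz, rfl⟩ := Submodule.mem_sup.mp hx
    simp only [add_mul]
    exact add_mem (hAmul y hy a ha) (hCA z hz a ha)
  have hIdealR : ∀ a ∈ A, ∀ a₀ ∈ A₀, a * a₀ ∈ A := by
    intro a ha a₀ ha₀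
    rw [hA₀set, hA₀c] at ha₀
    refine map_closure_mem (f := fun x => a * x)
      (continuous_const.mul continuous_id) hAclosed ?_ ha₀
    intro x hx
    obtain ⟨y, hy, z, hz, rfl⟩ := Submodule.mem_sup.mp hx
    simp only [mul_add]
    exact add_mem (hAmul a ha y hy) (hAC a ha z hz)
  -- A₀ C ⊆ A₀ and C A₀ ⊆ A₀
  have hA₀C : ∀ a₀ ∈ A₀, ∀ c ∈ (Cmod : Set (H →L[ℂ] H)), a₀ * c ∈ A₀mod := by
    intro a₀ ha₀ c hc
    rw [hA₀set, hA₀c] at ha₀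
    refine map_closure_mem (f := fun x => x * c)
      (continuous_id.mul continuous_const) hA₀closed ?_ ha₀
    intro x hx
    obtain ⟨y, hy, z, hz, rfl⟩ := Submodule.mem_sup.mp hx
    simp only [add_mul]
    exact add_mem (hAsubA₀ _ (hAC y hy c hc)) (hCsubA₀ _ (hCC z hz c hc))
  have hCA₀ : ∀ c ∈ (Cmod : Set (H →L[ℂ] H)), ∀ a₀ ∈ A₀, c * a₀ ∈ A₀mod := by
    intro c hc a₀ ha₀
    rw [hA₀set, hA₀c] at ha₀
    refine map_closure_mem (f := fun x => c * x)
      (continuous_const.mul continuous_id) hA₀closed ?_ ha₀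
    intro x hx
    obtain ⟨y, hy, z, hz, rfl⟩ := Submodule.mem_sup.mp hx
    simp only [mul_add]
    exact add_mem (hAsubA₀ _ (hCA c hc y hy)) (hCsubA₀ _ (hCC c hc z hz))
  -- powers of w* w lie in Cmod
  have hpowC : ∀ w ∈ M, ∀ j : ℕ, ((adjoint w ∘L w : H →L[ℂ] H)) ^ (j + 1) ∈ Cmod := by
    intro w hw j
    induction j with
    | zero => rw [pow_one]; exact hgenCsub ⟨w, hw, w, hw, rfl⟩
    | succ j ih =>
      rw [pow_succ]
      exact hCC _ ih _ (hgenCsub ⟨w, hw, w, hw, rfl⟩)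
  have hsaww : ∀ w : H →L[ℂ] K, IsSelfAdjoint (adjoint w ∘L w : H →L[ℂ] H) := by
    intro w
    rw [IsSelfAdjoint, star_eq_adjoint, adjoint_comp, adjoint_adjoint]
  refine ⟨?_, ?_, hIdealL, hIdealR⟩
  · -- Goal 1 : A₀ = csp {a₀ ∘L c}
    set gens₁ : Set (H →L[ℂ] H) := {T | ∃ a ∈ A₀, ∃ c ∈ C, T = a ∘L c} with hgens₁
    set D1 : Submodule ℂ (H →L[ℂ] H) := (span ℂ gens₁).topologicalClosure with hD1
    have hD1closed : IsClosed (D1 : Set (H →L[ℂ] H)) :=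
      Submodule.isClosed_topologicalClosure _
    have hD1c : csp gens₁ = (D1 : Set (H →L[ℂ] H)) :=
      (Submodule.topologicalClosure_coe _).symm
    rw [hD1c]
    -- w* w powers in D1
    have hww : ∀ w ∈ M, (adjoint w ∘L w : H →L[ℂ] H) ∈ D1 := by
      intro w hw
      have hmem := aux_key _ (hsaww w)
      refine map_closure_mem (f := id) continuous_id hD1closed ?_ hmem
      intro y hy
      refine Submodule.span_le.mpr ?_ hy
      rintro z ⟨k, rfl⟩
      refine Submodule.le_topologicalClosure _ (subset_span ?_)
      refine ⟨(adjoint w ∘L w) ^ (k + 1), ?_, adjoint w ∘L w, ?_, ?_⟩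
      · rw [hA₀set]; exact hCsubA₀ _ (hpowC w hw k)
      · rw [hCset]; exact hgenCsub ⟨w, hw, w, hw, rfl⟩
      · show (adjoint w ∘L w) ^ (k + 1 + 1) = _
        rw [pow_succ]; rfl
    have hsub1 : A₀ ⊆ (D1 : Set (H →L[ℂ] H)) := by
      rw [hA₀set, hA₀c]
      refine closure_minimal ?_ hD1closed
      intro x hx
      obtain ⟨y, hy, z, hz, rfl⟩ := Submodule.mem_sup.mp hx
      refine add_mem ?_ ?_
      · -- A ⊆ D1
        have hy' : y ∈ closure (span ℂ genA : Set (H →L[ℂ] H)) := by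
          have := hA ▸ (SetLike.mem_coe.mpr hy); exact this
        refine map_closure_mem (f := id) continuous_id hD1closed ?_ hy'
        intro u hu
        refine Submodule.span_le.mpr ?_ hu
        rintro x ⟨m, hm, b, hb, q, hq, rfl⟩
        have hb' : b ∈ closure (span ℂ genB : Set (K →L[ℂ] K)) := by
          have := hB ▸ (SetLike.mem_coe.mpr hb); exact this
        refine sandwich_mem (adjoint m) q genB D1 hD1closed ?_ b hb'
        rintro v ⟨p, hp, a, ha, t, ht, rfl⟩
        refine Submodule.le_topologicalClosure _ (subset_span ?_)
        have heq : adjoint m ∘L (p ∘L a ∘L adjoint t) ∘L q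
            = ((adjoint m ∘L p) ∘L a) ∘L (adjoint t ∘L q) := by
          simp only [ContinuousLinearMap.comp_assoc]
        rw [heq]
        have h1 : ((adjoint m ∘L p) ∘L a : H →L[ℂ] H) ∈ A₀ := by
          rw [hA₀set]
          exact hAsubA₀ _ (hCA _ (hgenCsub ⟨m, hm, p, hp, rfl⟩) a ha)
        have h2 : (adjoint t ∘L q : H →L[ℂ] H) ∈ C := by
          rw [hCset]; exact hgenCsub ⟨t, ht, q, hq, rfl⟩
        exact ⟨_, h1, _, h2, rfl⟩
      · -- Cmod ⊆ D1
        have hz' : z ∈ closure (span ℂ genC : Set (H →L[ℂ] H)) := by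
          rw [← hCmodc]; exact hz
        refine map_closure_mem (f := id) continuous_id hD1closed ?_ hz'
        intro u hu
        refine Submodule.span_le.mpr ?_ hu
        rintro x ⟨p, hp, q, hq, rfl⟩
        rw [aux_polar p q]
        refine D1.smul_mem _ (sub_mem (add_mem (sub_mem ?_ ?_) (D1.smul_mem _ ?_))
          (D1.smul_mem _ ?_))
        · exact hww _ (add_mem hq hp)
        · exact hww _ (sub_mem hq hp)
        · exact hww _ (add_mem hq (Submodule.smul_mem _ _ hp))
        · exact hww _ (sub_mem hq (Submodule.smul_mem _ _ hp))
    have hsub2 : (D1 : Set (H →L[ℂ] H)) ⊆ A₀ := by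
      rw [hA₀set]
      show ((span ℂ gens₁).topologicalClosure : Set (H →L[ℂ] H)) ⊆ _
      rw [Submodule.topologicalClosure_coe]
      refine closure_minimal ?_ hA₀closed
      intro x hx
      refine Submodule.span_le.mpr ?_ hx
      rintro u ⟨a, ha, c, hc, rfl⟩
      rw [hCset] at hc
      exact hA₀C a ha c hc
    exact Set.Subset.antisymm hsub1 hsub2
  · -- Goal 2 : A₀ = csp {c ∘L a₀}
    set gens₂ : Set (H →L[ℂ] H) := {T | ∃ c ∈ C, ∃ a ∈ A₀, T = c ∘L a} with hgens₂
    set D2 : Submodule ℂ (H →L[ℂ] H) := (span ℂ gens₂).topologicalClosure with hD2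
    have hD2closed : IsClosed (D2 : Set (H →L[ℂ] H)) :=
      Submodule.isClosed_topologicalClosure _
    have hD2c : csp gens₂ = (D2 : Set (H →L[ℂ] H)) :=
      (Submodule.topologicalClosure_coe _).symm
    rw [hD2c]
    have hww : ∀ w ∈ M, (adjoint w ∘L w : H →L[ℂ] H) ∈ D2 := by
      intro w hw
      have hmem := aux_key _ (hsaww w)
      refine map_closure_mem (f := id) continuous_id hD2closed ?_ hmem
      intro y hy
      refine Submodule.span_le.mpr ?_ hy
      rintro z ⟨k, rfl⟩
      refine Submodule.le_topologicalClosure _ (subset_span ?_)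
      refine ⟨adjoint w ∘L w, ?_, (adjoint w ∘L w) ^ (k + 1), ?_, ?_⟩
      · rw [hCset]; exact hgenCsub ⟨w, hw, w, hw, rfl⟩
      · rw [hA₀set]; exact hCsubA₀ _ (hpowC w hw k)
      · show (adjoint w ∘L w) ^ (k + 1 + 1) = _
        rw [pow_succ']; rfl
    have hsub1 : A₀ ⊆ (D2 : Set (H →L[ℂ] H)) := by
      rw [hA₀set, hA₀c]
      refine closure_minimal ?_ hD2closed
      intro x hx
      obtain ⟨y, hy, z, hz, rfl⟩ := Submodule.mem_sup.mp hx
      refine add_mem ?_ ?_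
      · have hy' : y ∈ closure (span ℂ genA : Set (H →L[ℂ] H)) := by
          have := hA ▸ (SetLike.mem_coe.mpr hy); exact this
        refine map_closure_mem (f := id) continuous_id hD2closed ?_ hy'
        intro u hu
        refine Submodule.span_le.mpr ?_ hu
        rintro x ⟨m, hm, b, hb, q, hq, rfl⟩
        have hb' : b ∈ closure (span ℂ genB : Set (K →L[ℂ] K)) := by
          have := hB ▸ (SetLike.mem_coe.mpr hb); exact this
        refine sandwich_mem (adjoint m) q genB D2 hD2closed ?_ b hb'
        rintro v ⟨p, hp, a, ha, t, ht, rfl⟩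
        refine Submodule.le_topologicalClosure _ (subset_span ?_)
        have heq : adjoint m ∘L (p ∘L a ∘L adjoint t) ∘L q
            = (adjoint m ∘L p) ∘L (a ∘L (adjoint t ∘L q)) := by
          simp only [ContinuousLinearMap.comp_assoc]
        rw [heq]
        have h1 : (adjoint m ∘L p : H →L[ℂ] H) ∈ C := by
          rw [hCset]; exact hgenCsub ⟨m, hm, p, hp, rfl⟩
        have h2 : (a ∘L (adjoint t ∘L q) : H →L[ℂ] H) ∈ A₀ := by
          rw [hA₀set]
          exact hAsubA₀ _ (hAC a ha _ (hgenCsub ⟨t, ht, q, hq, rfl⟩))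
        exact ⟨_, h1, _, h2, rfl⟩
      · have hz' : z ∈ closure (span ℂ genC : Set (H →L[ℂ] H)) := by
          rw [← hCmodc]; exact hz
        refine map_closure_mem (f := id) continuous_id hD2closed ?_ hz'
        intro u hu
        refine Submodule.span_le.mpr ?_ hu
        rintro x ⟨p, hp, q, hq, rfl⟩
        rw [aux_polar p q]
        refine D2.smul_mem _ (sub_mem (add_mem (sub_mem ?_ ?_) (D2.smul_mem _ ?_))
          (D2.smul_mem _ ?_))
        · exact hww _ (add_mem hq hp)
        · exact hww _ (sub_mem hq hp)
        · exact hww _ (add_mem hq (Submodule.smul_mem _ _ hp))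
        · exact hww _ (sub_mem hq (Submodule.smul_mem _ _ hp))
    have hsub2 : (D2 : Set (H →L[ℂ] H)) ⊆ A₀ := by
      rw [hA₀set]
      show ((span ℂ gens₂).topologicalClosure : Set (H →L[ℂ] H)) ⊆ _
      rw [Submodule.topologicalClosure_coe]
      refine closure_minimal ?_ hA₀closed
      intro x hx
      refine Submodule.span_le.mpr ?_ hx
      rintro u ⟨c, hc, a, ha, rfl⟩
      rw [hCset] at hc
      exact hCA₀ c hc a ha
    exact Set.Subset.antisymm hsub1 hsub2
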